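/- arXiv:2305.17163 — 8 statements merged into one kernel-verified Lean document; each statement's English description precedes it below -/
import Mathlib

section
/- Let A be a d×d complex matrix with operator norm at most 1, let v be a unit vector, and suppose A^n v = Σ_{i=0}^{n-1} λ_i A^i v with v, Av, ..., A^(n-1)v linearly independent. Then Σ_{i=0}^{n-1} |λ_i| ≤ n·(n+1)!/2. -/
/-!
Let `p = X ^ n - ∑ λᵢ Xⁱ`, so that `p(A) v = 0`. If `p(μ) = 0`, write `p = (X - μ) r`; since
`deg r < n`, linear independence of the Krylov vectors gives `u := r(A) v ≠ 0`, and `(A - μ) u = 0`.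
So every root of `p` is an eigenvalue of `A` and has modulus at most `‖A‖ ≤ 1`. By Vieta's formulas
`|λᵢ| ≤ (n choose i)`, whence `∑ |λᵢ| ≤ 2 ^ n - 1 ≤ n (n + 1)! / 2`.
-/

open Polynomial Finset Nat

section RelationPoly

variable {R : Type*} [CommRing R] {n : ℕ}

noncomputable def relationPoly (lam : Fin n → R) : R[X] :=
  X ^ n - ∑ i : Fin n, C (lam i) * X ^ (i : ℕ)

theorem relationPoly_monic [Nontrivial R] (lam : Fin n → R) : (relationPoly lam).Monic :=
  monic_X_pow_sub (degree_sum_fin_lt lam)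

theorem natDegree_relationPoly [Nontrivial R] (lam : Fin n → R) :
    (relationPoly lam).natDegree = n :=
  natDegree_eq_of_degree_eq_some <| by
    rw [relationPoly, degree_sub_eq_left_of_degree_lt] <;> simp [degree_sum_fin_lt]

theorem coeff_relationPoly (lam : Fin n → R) (i : Fin n) :
    (relationPoly lam).coeff i = -lam i := by
  simp [relationPoly, coeff_X_pow, i.2.ne, Fin.val_inj]

theorem aeval_relationPoly_apply {M : Type*} [AddCommGroup M] [Module R M] (f : Module.End R M)
    (v : M) (lam : Fin n → R) :
    aeval f (relationPoly lam) v = (f ^ n) v - ∑ i : Fin n, lam i • (f ^ (i : ℕ)) v := by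
  simp [relationPoly, LinearMap.sum_apply, Algebra.algebraMap_eq_smul_one]

end RelationPoly

section Krylov

variable {K M : Type*} [Field K] [AddCommGroup M] [Module K M] {f : Module.End K M} {v : M}
  {n : ℕ}

theorem aeval_apply_eq_sum_fin {r : K[X]} (hr : r.natDegree < n) :
    aeval f r v = ∑ i : Fin n, r.coeff i • (f ^ (i : ℕ)) v := by
  rw [aeval_eq_sum_range' hr, LinearMap.sum_apply, ← Fin.sum_univ_eq_sum_range]
  simp only [LinearMap.smul_apply]

theorem eq_zero_of_aeval_apply_eq_zero
    (hind : LinearIndependent K fun i : Fin n => (f ^ (i : ℕ)) v)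
    {r : K[X]} (hr : r.degree < n) (h : aeval f r v = 0) : r = 0 := by
  by_contra hr0
  have hcoeff := Fintype.linearIndependent_iff.mp hind (fun i => r.coeff i)
    ((aeval_apply_eq_sum_fin ((natDegree_lt_iff_degree_lt hr0).mpr hr)).symm.trans h)
  refine hr0 (ext fun i => ?_)
  rcases lt_or_ge i n with hi | hi
  · exact hcoeff ⟨i, hi⟩
  · exact coeff_eq_zero_of_degree_lt (hr.trans_le (by exact_mod_cast hi))

theorem hasEigenvalue_of_isRoot
    (hind : LinearIndependent K fun i : Fin n => (f ^ (i : ℕ)) v)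
    {p : K[X]} (hp0 : p ≠ 0) (hdeg : p.degree ≤ n) (hp : aeval f p v = 0)
    {μ : K} (hμ : p.IsRoot μ) : f.HasEigenvalue μ := by
  set r := p /ₘ (X - C μ)
  have hfactor : (X - C μ) * r = p := mul_divByMonic_eq_iff_isRoot.mpr hμ
  have hr0 : r ≠ 0 := by rintro hr; simp [hr, hp0.symm] at hfactor
  have hrdeg : r.degree < n := (degree_divByMonic_lt p _ hp0 (by simp)).trans_le hdeg
  refine Module.End.hasEigenvalue_of_hasEigenvector (x := aeval f r v)
    ⟨Module.End.mem_eigenspace_iff.mpr ?_,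
      fun h => hr0 (eq_zero_of_aeval_apply_eq_zero hind hrdeg h)⟩
  rw [← hfactor, map_mul, Module.End.mul_apply] at hp
  simpa [sub_eq_zero] using hp

end Krylov

theorem norm_le_opNorm_of_hasEigenvalue {𝕜 E : Type*} [NontriviallyNormedField 𝕜]
    [NormedAddCommGroup E] [NormedSpace 𝕜 E] (T : E →L[𝕜] E) {μ : 𝕜}
    (h : Module.End.HasEigenvalue (T : Module.End 𝕜 E) μ) : ‖μ‖ ≤ ‖T‖ := by
  obtain ⟨u, hu⟩ := h.exists_hasEigenvector
  refine le_of_mul_le_mul_right ?_ (norm_pos_iff.mpr hu.2)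
  calc ‖μ‖ * ‖u‖ = ‖T u‖ := by rw [← norm_smul, ← hu.apply_eq_smul]; rfl
    _ ≤ ‖T‖ * ‖u‖ := T.le_opNorm u

theorem norm_coeff_le_choose_of_forall_mem_roots {K : Type*} [NormedField K] [IsAlgClosed K]
    {p : K[X]} (hp : p.Monic) (hroots : ∀ z ∈ p.roots, ‖z‖ ≤ 1) (i : ℕ) :
    ‖p.coeff i‖ ≤ p.natDegree.choose i := by
  have h := coeff_le_of_roots_le (B := 1) i hp (IsAlgClosed.splits (p.map (RingHom.id K)))
    (by rwa [map_id])
  rwa [map_id, one_pow, one_mul] at h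

theorem two_mul_sum_range_choose_le_mul_factorial (n : ℕ) :
    2 * ∑ i ∈ range n, n.choose i ≤ n * (n + 1)! := by
  have hsum : ∑ i ∈ range n, n.choose i + 1 = 2 ^ n := by
    rw [← sum_range_choose, sum_range_succ, choose_self]
  calc 2 * ∑ i ∈ range n, n.choose i = 2 * (2 ^ n - 1) := by omega
    _ ≤ n * 2 ^ n := by
      rcases n with _ | _ | n
      · simp
      · simp
      · exact (Nat.mul_le_mul_left 2 (Nat.sub_le _ 1)).trans (Nat.mul_le_mul_right _ (by omega))
    _ ≤ n * (n + 1)! :=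
      Nat.mul_le_mul_left n (by simpa [add_comm] using @factorial_mul_pow_le_factorial 1 n)

theorem krylov_coeff_bound_of_norm_le_one_general
    (d n : ℕ) (A : Matrix (Fin d) (Fin d) ℂ)
    (hA : ‖Matrix.toEuclideanCLM (𝕜 := ℂ) A‖ ≤ 1)
    (v : EuclideanSpace ℂ (Fin d))
    (lam : Fin n → ℂ)
    (hdep : (Matrix.toEuclideanCLM (𝕜 := ℂ) A ^ n) v
      = ∑ i : Fin n, lam i • (Matrix.toEuclideanCLM (𝕜 := ℂ) A ^ (i : ℕ)) v)
    (hind : LinearIndependent ℂ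
      (fun i : Fin n => (Matrix.toEuclideanCLM (𝕜 := ℂ) A ^ (i : ℕ)) v)) :
    ∑ i : Fin n, ‖lam i‖ ≤ n * (Nat.factorial (n + 1)) / 2 := by
  set T := Matrix.toEuclideanCLM (𝕜 := ℂ) A
  have hpow (k : ℕ) : ((T : Module.End ℂ _) ^ k) v = (T ^ k) v := by
    rw [← ContinuousLinearMap.toLinearMap_pow]; rfl
  have hkill : aeval (T : Module.End ℂ _) (relationPoly lam) v = 0 := by
    simp only [aeval_relationPoly_apply, hpow, hdep, sub_self]
  have hroots (z : ℂ) (hz : z ∈ (relationPoly lam).roots) : ‖z‖ ≤ 1 :=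
    (norm_le_opNorm_of_hasEigenvalue T <| hasEigenvalue_of_isRoot (by simpa only [hpow])
      (relationPoly_monic lam).ne_zero (degree_le_of_natDegree_le (natDegree_relationPoly lam).le)
      hkill (isRoot_of_mem_roots hz)).trans hA
  calc ∑ i : Fin n, ‖lam i‖ ≤ ∑ i : Fin n, (n.choose i : ℝ) := sum_le_sum fun i _ => by
        simpa [coeff_relationPoly, natDegree_relationPoly] using
          norm_coeff_le_choose_of_forall_mem_roots (relationPoly_monic lam) hroots i
    _ = ((∑ i ∈ range n, n.choose i : ℕ) : ℝ) := by
        rw [Nat.cast_sum, Fin.sum_univ_eq_sum_range (fun i => (n.choose i : ℝ))]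
    _ ≤ n * (n + 1)! / 2 := by
        rw [le_div_iff₀ two_pos]
        exact_mod_cast (mul_comm _ _).trans_le (two_mul_sum_range_choose_le_mul_factorial n)

theorem krylov_coeff_bound_of_norm_le_one
    (d n : ℕ) (A : Matrix (Fin d) (Fin d) ℂ)
    (hA : ‖Matrix.toEuclideanCLM (𝕜 := ℂ) A‖ ≤ 1)
    (v : EuclideanSpace ℂ (Fin d)) (hv : ‖v‖ = 1)
    (lam : Fin n → ℂ)
    (hdep : (Matrix.toEuclideanCLM (𝕜 := ℂ) A ^ n) v
      = ∑ i : Fin n, lam i • (Matrix.toEuclideanCLM (𝕜 := ℂ) A ^ (i : ℕ)) v)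
    (hind : LinearIndependent ℂ
      (fun i : Fin n => (Matrix.toEuclideanCLM (𝕜 := ℂ) A ^ (i : ℕ)) v)) :
    ∑ i : Fin n, ‖lam i‖ ≤ n * (Nat.factorial (n + 1)) / 2 :=
  krylov_coeff_bound_of_norm_le_one_general d n A hA v lam hdep hind
end

section
/- Define n(d) := Σ_{m=1}^{d} (d choose m)·m!·m^(d-m). Then n(d) = Σ_{m=1}^{d} (d!/(d-m)!)·m^(d-m), and the ratio n(d)/d^d tends to 0 as d → ∞. -/
/-!
Write `n(d) = ∑ₘ d(d-1)⋯(d-m+1) · m^(d-m)`. With `q = ⌊d/4⌋`, every term is at most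
`(3/4)^q · d^d`: if `2m ≤ d`, then `m^(d-m) ≤ d^(d-m) / 2^(d-m)` and `d - m ≥ 2q`; if `2m > d`, the
last `q` factors of the falling factorial are all at most `3d/4`. Summing the `d` terms,
`n(d)/d^d ≤ d · (3/4)^⌊d/4⌋ → 0`.
-/

open Finset Filter Topology

namespace Nat

theorem descFactorial_le_pow_mul_pow {n m j : ℕ} (hj : j ≤ m) :
    n.descFactorial m ≤ (n - (m - j)) ^ j * n ^ (m - j) := by
  rw [← descFactorial_mul_descFactorial (Nat.sub_le m j), Nat.sub_sub_self hj]
  exact Nat.mul_le_mul (descFactorial_le_pow _ _) (descFactorial_le_pow _ _)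

theorem choose_mul_factorial_eq_descFactorial (n k : ℕ) :
    n.choose k * k ! = n.descFactorial k := by
  rw [descFactorial_eq_factorial_mul_choose, Nat.mul_comm]

end Nat

theorem tendsto_natCast_mul_pow_div_nhds_zero {r : ℝ} (hr₀ : 0 ≤ r) (hr₁ : r < 1) {k : ℕ}
    (hk : k ≠ 0) : Tendsto (fun n : ℕ => (n : ℝ) * r ^ (n / k)) atTop (𝓝 0) := by
  have hlim : Tendsto (fun j : ℕ => (k : ℝ) * ((j : ℝ) * r ^ j + r ^ j)) atTop (𝓝 0) := by
    simpa using ((tendsto_self_mul_const_pow_of_lt_one hr₀ hr₁).add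
      (tendsto_pow_atTop_nhds_zero_of_lt_one hr₀ hr₁)).const_mul (k : ℝ)
  refine squeeze_zero (fun n => by positivity) (fun n => ?_)
    (hlim.comp (Nat.tendsto_div_const_atTop hk))
  have hn : (n : ℝ) ≤ k * ((n / k : ℕ) + 1) := by
    exact_mod_cast (Nat.lt_mul_div_succ n (Nat.pos_of_ne_zero hk)).le
  calc (n : ℝ) * r ^ (n / k) ≤ k * ((n / k : ℕ) + 1) * r ^ (n / k) := by gcongr
    _ = _ := by simp only [Function.comp_apply]; ring

section TermBound

variable {d m q : ℕ}

theorem descFactorial_mul_pow_sub_mul_two_pow_le (hm : 2 * m ≤ d) :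
    d.descFactorial m * m ^ (d - m) * 2 ^ (d - m) ≤ d ^ d := by
  calc d.descFactorial m * m ^ (d - m) * 2 ^ (d - m)
      = d.descFactorial m * (2 * m) ^ (d - m) := by rw [mul_pow]; ring
    _ ≤ d ^ m * d ^ (d - m) :=
        Nat.mul_le_mul (Nat.descFactorial_le_pow d m) (Nat.pow_le_pow_left (by omega) _)
    _ = d ^ d := by rw [← pow_add, Nat.add_sub_cancel' (by omega)]

theorem descFactorial_mul_four_pow_le (hq : 4 * q ≤ d) (hm : d < 2 * m) :
    d.descFactorial m * 4 ^ q ≤ 3 ^ q * d ^ m := by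
  have hqm : q ≤ m := by omega
  calc d.descFactorial m * 4 ^ q ≤ (d - (m - q)) ^ q * d ^ (m - q) * 4 ^ q := by
        gcongr; exact Nat.descFactorial_le_pow_mul_pow hqm
    _ = (4 * (d - (m - q))) ^ q * d ^ (m - q) := by rw [mul_pow]; ring
    _ ≤ (3 * d) ^ q * d ^ (m - q) := Nat.mul_le_mul_right _ (Nat.pow_le_pow_left (by omega) _)
    _ = 3 ^ q * d ^ m := by rw [mul_pow, mul_assoc, ← pow_add, Nat.add_sub_cancel' hqm]

theorem descFactorial_mul_pow_sub_mul_four_pow_le (hq : 4 * q ≤ d) (hm : m ≤ d) :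
    d.descFactorial m * m ^ (d - m) * 4 ^ q ≤ d ^ d * 3 ^ q := by
  rcases le_or_gt (2 * m) d with hsmall | hlarge
  · have h4 : 4 ^ q ≤ 2 ^ (d - m) := by
      rw [show 4 ^ q = 2 ^ (2 * q) by rw [pow_mul]; norm_num]
      exact Nat.pow_le_pow_right two_pos (by omega)
    calc d.descFactorial m * m ^ (d - m) * 4 ^ q
        ≤ d.descFactorial m * m ^ (d - m) * 2 ^ (d - m) * 3 ^ q := by
          rw [mul_assoc _ (2 ^ _)]
          exact Nat.mul_le_mul_left _ (h4.trans (Nat.le_mul_of_pos_right _ (by positivity)))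
      _ ≤ d ^ d * 3 ^ q := by gcongr; exact descFactorial_mul_pow_sub_mul_two_pow_le hsmall
  · calc d.descFactorial m * m ^ (d - m) * 4 ^ q
        = d.descFactorial m * 4 ^ q * m ^ (d - m) := Nat.mul_right_comm _ _ _
      _ ≤ 3 ^ q * d ^ m * d ^ (d - m) :=
          Nat.mul_le_mul (descFactorial_mul_four_pow_le hq hlarge) (Nat.pow_le_pow_left hm _)
      _ = d ^ d * 3 ^ q := by rw [mul_assoc, ← pow_add, Nat.add_sub_cancel' hm, mul_comm]

end TermBound

/-- The number `n(d)` of quantum-embeddable extreme `d × d` stochastic matrices. -/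
def embeddableCount (d : ℕ) : ℕ :=
  ∑ m ∈ Icc 1 d, Nat.choose d m * Nat.factorial m * m ^ (d - m)

theorem embeddableCount_eq_sum_descFactorial (d : ℕ) :
    embeddableCount d = ∑ m ∈ Icc 1 d, d.descFactorial m * m ^ (d - m) := by
  simp only [embeddableCount, Nat.choose_mul_factorial_eq_descFactorial]

theorem embeddableCount_mul_four_pow_le {d q : ℕ} (hq : 4 * q ≤ d) :
    embeddableCount d * 4 ^ q ≤ d * (d ^ d * 3 ^ q) := by
  calc embeddableCount d * 4 ^ q = ∑ m ∈ Icc 1 d, d.descFactorial m * m ^ (d - m) * 4 ^ q := by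
        rw [embeddableCount_eq_sum_descFactorial, sum_mul]
    _ ≤ ∑ _m ∈ Icc 1 d, d ^ d * 3 ^ q :=
        sum_le_sum fun m hm => descFactorial_mul_pow_sub_mul_four_pow_le hq (mem_Icc.1 hm).2
    _ = d * (d ^ d * 3 ^ q) := by rw [sum_const, Nat.card_Icc, Nat.add_sub_cancel, smul_eq_mul]

theorem embeddableCount_div_pow_le (d : ℕ) :
    (embeddableCount d : ℝ) / d ^ d ≤ d * (3 / 4) ^ (d / 4) := by
  have hdd : (0 : ℝ) < d ^ d := by exact_mod_cast Nat.pow_self_pos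
  have hcount : (embeddableCount d : ℝ) * 4 ^ (d / 4) ≤ d * (d ^ d * 3 ^ (d / 4)) := by
    exact_mod_cast embeddableCount_mul_four_pow_le (Nat.mul_div_le d 4)
  rw [div_le_iff₀ hdd, div_pow]
  calc (embeddableCount d : ℝ) ≤ d * (d ^ d * 3 ^ (d / 4)) / 4 ^ (d / 4) :=
        (le_div_iff₀ (by positivity)).2 hcount
    _ = _ := by ring

theorem quantum_embeddable_extreme_count :
    (∀ d : ℕ, ∑ m ∈ Finset.Icc 1 d, Nat.choose d m * Nat.factorial m * m ^ (d - m)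
        = ∑ m ∈ Finset.Icc 1 d, (Nat.factorial d / Nat.factorial (d - m)) * m ^ (d - m)) ∧
    Filter.Tendsto
      (fun d : ℕ =>
        ((∑ m ∈ Finset.Icc 1 d, Nat.choose d m * Nat.factorial m * m ^ (d - m) : ℕ) : ℝ)
          / (d : ℝ) ^ d)
      Filter.atTop (nhds 0) := by
  refine ⟨fun d => ?_, ?_⟩
  · refine (embeddableCount_eq_sum_descFactorial d).trans (sum_congr rfl fun m hm => ?_)
    rw [Nat.descFactorial_eq_div (mem_Icc.1 hm).2]
  · exact squeeze_zero (fun d => by positivity) embeddableCount_div_pow_le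
      (tendsto_natCast_mul_pow_div_nhds_zero (by norm_num) (by norm_num) four_ne_zero)
end

section
/- Let T be a d×d stochastic matrix that is classically embeddable, i.e., T = exp(L·t) for some t ≥ 0 and some real d×d matrix L with non-negative off-diagonal entries and each column summing to 0. Then ∏_{i=1}^d T_{ii} ≥ det T ≥ 0. -/
/-!
Jacobi's formula makes `s ↦ det (exp (s • A))` solve `f' = (trace A) f`, so
`det (exp (t • L)) = exp (t * trace L) = ∏ i, exp (t * L i i)`, which is positive.
For the diagonal: `t • L` has non-negative off-diagonal entries, so adding a large multiple
`c • 1` makes it entrywise non-negative. Powers of a non-negative matrix dominate the powers of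
its diagonal entries, hence so does its exponential series, and the commuting shift only
contributes a factor `exp (-c)`. This gives `exp (t * L i i) ≤ T i i`.
-/

open NormedSpace Matrix Finset

namespace Matrix

variable {n : Type*} [Fintype n] [DecidableEq n]

section Jacobi

variable {𝕜 : Type*} [NontriviallyNormedField 𝕜]

noncomputable def detRowContinuousMultilinear :
    ContinuousMultilinearMap 𝕜 (fun _ : n => n → 𝕜) 𝕜 where
  toMultilinearMap := (detRowAlternating : (n → 𝕜) [⋀^n]→ₗ[𝕜] 𝕜).toMultilinearMap
  cont := continuous_id.matrix_det

theorem _root_.HasDerivAt.matrix_det {γ : 𝕜 → n → n → 𝕜} {γ' : n → n → 𝕜} {u : 𝕜}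
    (h : HasDerivAt γ γ' u) :
    HasDerivAt (fun s => (of (γ s)).det) (∑ i, ((of (γ u)).updateRow i (γ' i)).det) u := by
  have := (detRowContinuousMultilinear.hasFDerivAt (γ u)).comp_hasDerivAt u h
  rwa [ContinuousMultilinearMap.linearDeriv_apply] at this

end Jacobi

theorem det_updateRow_mul_apply {R : Type*} [CommRing R] (A M : Matrix n n R) (i : n) :
    (M.updateRow i ((A * M) i)).det = A i i * M.det := by
  have hrow : (A * M) i = ∑ k, A i k • M k := by
    ext j
    simp [mul_apply, Finset.sum_apply]
  rw [hrow, det_updateRow_sum, smul_eq_mul]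

-- `of.symm` puts the entrywise sup norm on the target, the one `HasDerivAt.matrix_det` uses.
open scoped Matrix.Norms.Operator in
theorem hasDerivAt_of_symm_exp_smul (A : Matrix n n ℝ) (u : ℝ) :
    HasDerivAt (fun s : ℝ => of.symm (exp (s • A))) (of.symm (A * exp (u • A))) u :=
  let entries : Matrix n n ℝ →ₗ[ℝ] n → n → ℝ := (ofLinearEquiv ℝ).symm.toLinearMap
  (LinearMap.toContinuousLinearMap entries).hasFDerivAt.comp_hasDerivAt u
    (hasDerivAt_exp_smul_const' A u)

theorem hasDerivAt_det_exp_smul (A : Matrix n n ℝ) (u : ℝ) :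
    HasDerivAt (fun s : ℝ => (exp (s • A)).det) (A.trace * (exp (u • A)).det) u := by
  refine (hasDerivAt_of_symm_exp_smul A u).matrix_det.congr_deriv ?_
  change ∑ i, ((exp (u • A)).updateRow i ((A * exp (u • A)) i)).det = _
  simp only [det_updateRow_mul_apply, ← sum_mul, trace, diag]

theorem det_exp_smul (A : Matrix n n ℝ) (s : ℝ) :
    (exp (s • A)).det = Real.exp (s * A.trace) := by
  have hderiv (u : ℝ) :
      HasDerivAt (fun u => (exp (u • A)).det * Real.exp (-(u * A.trace))) 0 u := by
    have hdecay : HasDerivAt (fun u => Real.exp (-(u * A.trace)))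
        (Real.exp (-(u * A.trace)) * -A.trace) u :=
      (hasDerivAt_mul_const A.trace).neg.exp
    exact ((hasDerivAt_det_exp_smul A u).mul hdecay).congr_deriv (by ring)
  have hconst := is_const_of_deriv_eq_zero (fun u => (hderiv u).differentiableAt)
    (fun u => (hderiv u).deriv) s 0
  simp only [zero_smul, exp_zero, det_one, zero_mul, neg_zero, Real.exp_zero, one_mul] at hconst
  calc (exp (s • A)).det
      = (exp (s • A)).det * (Real.exp (-(s * A.trace)) * Real.exp (s * A.trace)) := by
        rw [← Real.exp_add, neg_add_cancel, Real.exp_zero, mul_one]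
    _ = Real.exp (s * A.trace) := by rw [← mul_assoc, hconst, one_mul]

theorem apply_self_pow_le_pow_apply_self {R : Type*} [Semiring R] [PartialOrder R]
    [IsOrderedRing R] {A : Matrix n n R} (hA : ∀ i j, 0 ≤ A i j) (k : ℕ) (i : n) :
    A i i ^ k ≤ (A ^ k) i i := by
  induction k with
  | zero => simp
  | succ k ih =>
    calc A i i ^ (k + 1) = A i i ^ k * A i i := pow_succ _ _
      _ ≤ (A ^ k) i i * A i i := mul_le_mul_of_nonneg_right ih (hA i i)
      _ ≤ ∑ j, (A ^ k) i j * A j i :=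
          single_le_sum (f := fun j => (A ^ k) i j * A j i)
            (fun j _ => mul_nonneg (pow_apply_nonneg hA k i j) (hA j i)) (mem_univ i)
      _ = (A ^ (k + 1)) i i := by rw [pow_succ, mul_apply]

open scoped Matrix.Norms.Operator in
theorem hasSum_exp_apply (A : Matrix n n ℝ) (i j : n) :
    HasSum (fun k : ℕ => (k.factorial : ℝ)⁻¹ * (A ^ k) i j) (exp A i j) := by
  have h := Pi.hasSum.1 (Pi.hasSum.1 (exp_series_hasSum_exp' (𝕂 := ℝ) A) i) j
  simp only [smul_apply, smul_eq_mul] at h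
  exact h

theorem real_exp_le_exp_apply_self_of_nonneg {A : Matrix n n ℝ} (hA : ∀ i j, 0 ≤ A i j)
    (i : n) : Real.exp (A i i) ≤ exp A i i := by
  have hscalar : HasSum (fun k : ℕ => (k.factorial : ℝ)⁻¹ * A i i ^ k) (Real.exp (A i i)) := by
    simpa [Real.exp_eq_exp_ℝ] using exp_series_hasSum_exp' (𝕂 := ℝ) (A i i)
  exact hasSum_le
    (fun k => mul_le_mul_of_nonneg_left (apply_self_pow_le_pow_apply_self hA k i) (by positivity))
    hscalar (hasSum_exp_apply A i i)

theorem real_exp_le_exp_apply_self {A : Matrix n n ℝ} (hA : ∀ i j, i ≠ j → 0 ≤ A i j) (i : n) :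
    Real.exp (A i i) ≤ exp A i i := by
  set c := ∑ k, |A k k|
  set B := A + diagonal fun _ => c
  have hB : ∀ i j, 0 ≤ B i j := by
    intro i j
    rcases eq_or_ne i j with rfl | hij
    · have : |A i i| ≤ c :=
        single_le_sum (f := fun k => |A k k|) (fun k _ => abs_nonneg _) (mem_univ i)
      simp only [B, add_apply, diagonal_apply_eq]
      linarith [neg_abs_le (A i i)]
    · simpa [B, hij] using hA i j hij
  have hexpA : exp A = exp B * diagonal fun _ => Real.exp (-c) := by
    have hAB : A = B + diagonal fun _ => -c := by simp [B, add_assoc, diagonal_add]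
    have hcomm : Commute B (diagonal fun _ => -c) := by
      rw [← smul_one_eq_diagonal]
      exact (Commute.one_right B).smul_right _
    rw [hAB, exp_add_of_commute _ _ hcomm, exp_diagonal, Pi.exp_def, Real.exp_eq_exp_ℝ]
  calc Real.exp (A i i) = Real.exp (B i i) * Real.exp (-c) := by
        rw [← Real.exp_add]
        simp [B]
    _ ≤ exp B i i * Real.exp (-c) := by
        gcongr
        exact real_exp_le_exp_apply_self_of_nonneg hB i
    _ = exp A i i := by rw [hexpA, mul_diagonal]

end Matrix

theorem goodman_condition_of_classically_embeddable_general
    (d : ℕ) (L : Matrix (Fin d) (Fin d) ℝ)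
    (hoff : ∀ i j, i ≠ j → 0 ≤ L i j)
    (t : ℝ) (ht : 0 ≤ t)
    (T : Matrix (Fin d) (Fin d) ℝ) (hT : T = NormedSpace.exp (t • L)) :
    T.det ≤ ∏ i, T i i ∧ 0 ≤ T.det := by
  subst hT
  have hdiag (i : Fin d) : Real.exp (t * L i i) ≤ exp (t • L) i i :=
    real_exp_le_exp_apply_self (fun i j hij => mul_nonneg ht (hoff i j hij)) i
  have hdet : (exp (t • L)).det = ∏ i, Real.exp (t * L i i) := by
    rw [det_exp_smul, trace, mul_sum, Real.exp_sum]
    rfl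
  rw [hdet]
  exact ⟨prod_le_prod (fun i _ => (Real.exp_pos _).le) (fun i _ => hdiag i),
    prod_nonneg fun i _ => (Real.exp_pos _).le⟩

theorem goodman_condition_of_classically_embeddable
    (d : ℕ) (L : Matrix (Fin d) (Fin d) ℝ)
    (hoff : ∀ i j, i ≠ j → 0 ≤ L i j)
    (hcol : ∀ j, ∑ i, L i j = 0)
    (t : ℝ) (ht : 0 ≤ t)
    (T : Matrix (Fin d) (Fin d) ℝ) (hT : T = NormedSpace.exp (t • L)) :
    T.det ≤ ∏ i, T i i ∧ 0 ≤ T.det :=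
  goodman_condition_of_classically_embeddable_general d L hoff t ht T hT
end

section
/- Let ρ and σ be density matrices (positive semidefinite, unit trace) on a finite-dimensional complex Hilbert space. Then the trace distance D(ρ,σ) = ½‖ρ−σ‖₁ satisfies D(ρ,σ) ≥ 1 − Tr(ρσ) − M(ρ)M(σ), where M(ρ) = √(1 − Tr(ρ²)). -/
/-!
In the eigenbasis of `Δ = ρ - σ`, `Re Tr (ρ Δ) = ∑ cᵢ λᵢ`, where `cᵢ` is the diagonal of `ρ` in
that basis (a probability vector) and `∑ λᵢ = Tr Δ = 0`; hence `Re Tr (ρ Δ) ≤ ∑ λᵢ⁺ = ‖Δ‖₁ / 2`.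
By symmetry we may assume `M(ρ) ≤ M(σ)`, so that `M(ρ) M(σ) ≥ M(ρ)² = 1 - Tr ρ²` and
`1 - Tr (ρ σ) - M(ρ) M(σ) ≤ Tr ρ² - Tr (ρ σ) = Re Tr (ρ Δ)`.
-/

open scoped ComplexOrder
open scoped MatrixOrder in
/-- The trace norm (sum of singular values) of a complex matrix. -/
noncomputable def traceNorm {d : ℕ} (X : Matrix (Fin d) (Fin d) ℂ) : ℝ :=
  ((CFC.sqrt (X.conjTranspose * X)).trace).re

/-- Mixedness measure `M(ρ) = √(1 - Tr ρ²)`. -/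
noncomputable def mixedness {d : ℕ} (ρ : Matrix (Fin d) (Fin d) ℂ) : ℝ :=
  Real.sqrt (1 - ((ρ * ρ).trace).re)

open Matrix Unitary
open scoped MatrixOrder

theorem Finset.sum_mul_le_half_sum_abs {ι : Type*} [Fintype ι] {c x : ι → ℝ}
    (hc : ∀ i, 0 ≤ c i) (hc1 : ∑ i, c i = 1) (hx : ∑ i, x i = 0) :
    ∑ i, c i * x i ≤ (∑ i, |x i|) / 2 := by
  have hc_le_one (i : ι) : c i ≤ 1 :=
    hc1 ▸ Finset.single_le_sum (fun j _ ↦ hc j) (Finset.mem_univ i)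
  have hterm (i : ι) : c i * x i ≤ (|x i| + x i) / 2 := by
    rcases le_total 0 (x i) with h | h
    · rw [abs_of_nonneg h]; nlinarith [hc_le_one i]
    · rw [abs_of_nonpos h]; nlinarith [hc i]
  calc ∑ i, c i * x i ≤ ∑ i, (|x i| + x i) / 2 := Finset.sum_le_sum fun i _ ↦ hterm i
    _ = (∑ i, |x i|) / 2 := by rw [← Finset.sum_div, Finset.sum_add_distrib, hx, add_zero]

namespace Matrix

variable {n 𝕜 : Type*} [Fintype n] [DecidableEq n] [RCLike 𝕜]

theorem trace_conjStarAlgAut (U : unitary (Matrix n n 𝕜)) (A : Matrix n n 𝕜) :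
    (conjStarAlgAut 𝕜 _ U A).trace = A.trace := by
  rw [conjStarAlgAut_apply, trace_mul_cycle, coe_star_mul_self, one_mul]

theorem IsHermitian.trace_cfc {A : Matrix n n 𝕜} (hA : A.IsHermitian) (f : ℝ → ℝ) :
    (cfc f A).trace = ∑ i, (f (hA.eigenvalues i) : 𝕜) := by
  rw [hA.cfc_eq, IsHermitian.cfc, trace_conjStarAlgAut, trace_diagonal]
  rfl

theorem IsHermitian.trace_mul_eq_sum_mul_eigenvalues {B : Matrix n n 𝕜} (hB : B.IsHermitian)
    (A : Matrix n n 𝕜) :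
    (A * B).trace =
      ∑ i, conjStarAlgAut 𝕜 _ (star hB.eigenvectorUnitary) A i i * hB.eigenvalues i := by
  conv_lhs => rw [hB.spectral_theorem]
  rw [← trace_conjStarAlgAut (star hB.eigenvectorUnitary), map_mul,
    ← conjStarAlgAut_mul_apply, star_mul_self, map_one, StarAlgEquiv.one_apply]
  simp only [trace, diag, mul_diagonal, Function.comp_apply]

end Matrix

section

variable {d : ℕ}

theorem traceNorm_eq_re_trace_abs (X : Matrix (Fin d) (Fin d) ℂ) :
    traceNorm X = (CFC.abs X).trace.re :=
  rfl

theorem traceNorm_sub_comm (A B : Matrix (Fin d) (Fin d) ℂ) :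
    traceNorm (A - B) = traceNorm (B - A) := by
  rw [traceNorm_eq_re_trace_abs, traceNorm_eq_re_trace_abs, ← neg_sub, CFC.abs_neg]

theorem Matrix.IsHermitian.traceNorm_eq_sum_abs_eigenvalues {A : Matrix (Fin d) (Fin d) ℂ}
    (hA : A.IsHermitian) :
    traceNorm A = ∑ i, |hA.eigenvalues i| := by
  rw [traceNorm_eq_re_trace_abs, CFC.abs_eq_cfc_norm A hA.isSelfAdjoint, hA.trace_cfc]
  simp

theorem Matrix.PosSemidef.re_trace_mul_le_traceNorm_div_two {ρ Δ : Matrix (Fin d) (Fin d) ℂ}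
    (hρ : ρ.PosSemidef) (hρ1 : ρ.trace = 1) (hΔ : Δ.IsHermitian) (hΔ0 : Δ.trace = 0) :
    (ρ * Δ).trace.re ≤ traceNorm Δ / 2 := by
  set ρ' := conjStarAlgAut ℂ _ (star hΔ.eigenvectorUnitary) ρ
  have hρ' : ρ'.PosSemidef := by
    simpa only [ρ', conjStarAlgAut_apply, star_eq_conjTranspose]
      using hρ.mul_mul_conjTranspose_same _
  have hρ'1 : ρ'.trace = 1 := (trace_conjStarAlgAut _ _).trans hρ1
  rw [hΔ.trace_mul_eq_sum_mul_eigenvalues, hΔ.traceNorm_eq_sum_abs_eigenvalues, Complex.re_sum]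
  refine (Finset.sum_congr rfl fun i _ ↦ Complex.re_mul_ofReal _ _).trans_le <|
    Finset.sum_mul_le_half_sum_abs (fun i ↦ (Complex.le_def.1 hρ'.diag_nonneg).1) ?_ ?_
  · rw [← Complex.one_re, ← hρ'1, trace, Complex.re_sum]
    rfl
  · simpa [hΔ0] using (congrArg Complex.re hΔ.trace_eq_sum_eigenvalues).symm

theorem Matrix.PosSemidef.re_trace_mul_self_le_one {ρ : Matrix (Fin d) (Fin d) ℂ}
    (hρ : ρ.PosSemidef) (hρ1 : ρ.trace = 1) :
    (ρ * ρ).trace.re ≤ 1 := by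
  have hsum : ∑ i, hρ.isHermitian.eigenvalues i = 1 := by
    simpa [hρ1] using (congrArg Complex.re hρ.isHermitian.trace_eq_sum_eigenvalues).symm
  have hsq : ρ * ρ = cfc (fun x : ℝ ↦ x ^ 2) ρ := by
    rw [cfc_pow_id ρ 2 hρ.isHermitian.isSelfAdjoint, sq]
  rw [hsq, hρ.isHermitian.trace_cfc]
  calc (∑ i, ((hρ.isHermitian.eigenvalues i ^ 2 : ℝ) : ℂ)).re
      = ∑ i, hρ.isHermitian.eigenvalues i ^ 2 := by
        simp only [Complex.re_sum, Complex.ofReal_re]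
    _ ≤ (∑ i, hρ.isHermitian.eigenvalues i) ^ 2 :=
      Finset.sum_sq_le_sq_sum_of_nonneg fun i _ ↦ hρ.eigenvalues_nonneg i
    _ = 1 := by rw [hsum, one_pow]

theorem sq_mixedness {ρ : Matrix (Fin d) (Fin d) ℂ} (hρ : ρ.PosSemidef)
    (hρ1 : ρ.trace = 1) :
    mixedness ρ ^ 2 = 1 - (ρ * ρ).trace.re :=
  Real.sq_sqrt (sub_nonneg.2 (hρ.re_trace_mul_self_le_one hρ1))

end

theorem trace_distance_lower_bound
    (d : ℕ) (ρ σ : Matrix (Fin d) (Fin d) ℂ)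
    (hρ : ρ.PosSemidef) (hρ1 : ρ.trace = 1)
    (hσ : σ.PosSemidef) (hσ1 : σ.trace = 1) :
    1 - ((ρ * σ).trace).re - mixedness ρ * mixedness σ ≤ traceNorm (ρ - σ) / 2 := by
  wlog hM : mixedness ρ ≤ mixedness σ generalizing ρ σ
  · rw [trace_mul_comm, mul_comm, traceNorm_sub_comm]
    exact this σ ρ hσ hσ1 hρ hρ1 (le_of_not_ge hM)
  have hΔ0 : (ρ - σ).trace = 0 := by rw [trace_sub, hρ1, hσ1, sub_self]
  calc 1 - (ρ * σ).trace.re - mixedness ρ * mixedness σ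
      ≤ 1 - (ρ * σ).trace.re - mixedness ρ ^ 2 := by
        rw [sq]; gcongr; exact Real.sqrt_nonneg _
    _ = (ρ * (ρ - σ)).trace.re := by
        rw [sq_mixedness hρ hρ1, mul_sub, trace_sub, Complex.sub_re]; ring
    _ ≤ traceNorm (ρ - σ) / 2 :=
        hρ.re_trace_mul_le_traceNorm_div_two hρ1 (hρ.isHermitian.sub hσ.isHermitian) hΔ0
end

section
/- If a qubit quantum channel (completely positive trace-preserving map on 2×2 matrices) maps two distinct pure states to the same pure state |ψ⟩⟨ψ|, then it maps every density matrix to |ψ⟩⟨ψ|. -/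
open scoped ComplexOrder

/-- A quantum channel in dimension `d`: a linear map on `d × d` matrices that is
completely positive (positive semidefinite Choi matrix) and trace-preserving. -/
def IsCPTP {d : ℕ} (E : Matrix (Fin d) (Fin d) ℂ →ₗ[ℂ] Matrix (Fin d) (Fin d) ℂ) : Prop :=
  (Matrix.PosSemidef (Matrix.of fun p q : Fin d × Fin d =>
      E (Matrix.single p.1 q.1 1) p.2 q.2)) ∧
  ∀ X, (E X).trace = X.trace

/-- A pure state: a rank-one orthogonal projection (PSD, idempotent, trace one). -/
def IsPureState {d : ℕ} (P : Matrix (Fin d) (Fin d) ℂ) : Prop :=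
  P.PosSemidef ∧ P.trace = 1 ∧ P * P = P

/-!
Since `P₁ ≠ P₂` are qubit states, no nonzero vector lies in both kernels (a traceless Hermitian
`2 × 2` matrix with a kernel vanishes), so `σ = P₁ + P₂` is positive definite and every state
satisfies `ρ ≤ c • σ`. A positive semidefinite Choi matrix makes `E` monotone, whence
`E ρ ≤ c • E σ = 2c • Q`. A positive matrix dominated by a multiple of the rank-one projection `Q`
is a multiple of `Q`, and trace preservation fixes the multiple to be `1`.
-/

open scoped MatrixOrder
open Matrix

section Choi

variable {𝕜 : Type*} [RCLike 𝕜] {n m : Type*} [Fintype n] [DecidableEq n]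

def choiMatrix (E : Matrix n n 𝕜 →ₗ[𝕜] Matrix m m 𝕜) : Matrix (n × m) (n × m) 𝕜 :=
  of fun p q => E (single p.1 q.1 1) p.2 q.2

lemma map_apply_eq_sum_choiMatrix (E : Matrix n n 𝕜 →ₗ[𝕜] Matrix m m 𝕜) (X : Matrix n n 𝕜)
    (p q : m) : E X p q = ∑ i, ∑ j, X i j * choiMatrix E (i, p) (j, q) := by
  conv_lhs => rw [matrix_eq_sum_single X]
  simp only [map_sum, Matrix.sum_apply]
  refine Finset.sum_congr rfl fun i _ => Finset.sum_congr rfl fun j _ => ?_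
  have hsingle : single i j (X i j) = X i j • single i j (1 : 𝕜) := by
    rw [smul_single, smul_eq_mul, mul_one]
  rw [hsingle, map_smul, Matrix.smul_apply, smul_eq_mul]
  rfl

variable [Fintype m] [DecidableEq m]

lemma exists_map_vecMulVec_eq_conjTranspose_mul_choiMatrix_mul
    (E : Matrix n n 𝕜 →ₗ[𝕜] Matrix m m 𝕜) (u : n → 𝕜) :
    ∃ V : Matrix (n × m) m 𝕜, E (vecMulVec u (star u)) = Vᴴ * choiMatrix E * V := by
  refine ⟨of fun jq q => if jq.2 = q then star (u jq.1) else 0, ?_⟩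
  ext p q
  rw [map_apply_eq_sum_choiMatrix]
  simp only [vecMulVec_apply, Pi.star_apply, RCLike.star_def, mul_apply, conjTranspose_apply,
    of_apply, apply_ite (starRingEnd 𝕜), RingHomCompTriple.comp_apply, RingHom.id_apply, map_zero,
    ite_mul, zero_mul, Fintype.sum_prod_type, Finset.sum_ite_eq', Finset.mem_univ, ↓reduceIte,
    mul_ite, Finset.sum_mul, mul_zero]
  rw [Finset.sum_comm]
  exact Finset.sum_congr rfl fun _ _ => Finset.sum_congr rfl fun _ _ => by ring

lemma posSemidef_map_of_posSemidef_choiMatrix {E : Matrix n n 𝕜 →ₗ[𝕜] Matrix m m 𝕜}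
    (hE : (choiMatrix E).PosSemidef) {X : Matrix n n 𝕜} (hX : X.PosSemidef) :
    (E X).PosSemidef := by
  obtain ⟨k, v, rfl⟩ := posSemidef_iff_eq_sum_vecMulVec.mp hX
  rw [map_sum]
  refine posSemidef_sum _ fun i _ => ?_
  obtain ⟨V, hV⟩ := exists_map_vecMulVec_eq_conjTranspose_mul_choiMatrix_mul E (v i)
  exact hV ▸ hE.conjTranspose_mul_mul_same V

lemma monotone_of_posSemidef_choiMatrix {E : Matrix n n 𝕜 →ₗ[𝕜] Matrix m m 𝕜}
    (hE : (choiMatrix E).PosSemidef) : Monotone E := fun A B hAB => by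
  rw [le_iff, ← map_sub]
  exact posSemidef_map_of_posSemidef_choiMatrix hE hAB

end Choi

lemma exists_le_smul_of_isStrictlyPositive {A : Type*} [TopologicalSpace A] [Ring A] [StarRing A]
    [PartialOrder A] [StarOrderedRing A] [Algebra ℝ A] [NonnegSpectrumClass ℝ A] [Nontrivial A]
    [ContinuousFunctionalCalculus ℝ A IsSelfAdjoint] [PosSMulMono ℝ A] {a b : A}
    (ha : IsSelfAdjoint a) (hb : IsStrictlyPositive b) : ∃ c : ℝ, a ≤ c • b := by
  obtain ⟨r, hr, hrb⟩ := (CFC.exists_pos_algebraMap_le_iff hb.isSelfAdjoint).mpr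
    fun _ hx => hb.spectrum_pos hx
  obtain ⟨s, hs⟩ := (ContinuousFunctionalCalculus.isCompact_spectrum (R := ℝ) a).bddAbove
  have has : a ≤ algebraMap ℝ A (max s 0) :=
    le_algebraMap_of_spectrum_le (fun _ hx => (hs hx).trans (le_max_left _ _)) ha
  refine ⟨max s 0 / r, has.trans ?_⟩
  calc algebraMap ℝ A (max s 0) = (max s 0 / r) • algebraMap ℝ A r := by
        rw [Algebra.algebraMap_eq_smul_one, Algebra.algebraMap_eq_smul_one, smul_smul,
          div_mul_cancel₀ _ hr.ne']
    _ ≤ (max s 0 / r) • b := smul_le_smul_of_nonneg_left hrb (by positivity)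

lemma mul_one_sub_eq_zero_of_le_smul {𝕜 n : Type*} [RCLike 𝕜] [Fintype n] [DecidableEq n]
    {A Q : Matrix n n 𝕜} (hQ : IsIdempotentElem Q) (hA : 0 ≤ A) {t : ℝ} (hAQ : A ≤ t • Q) :
    A * (1 - Q) = 0 := by
  rw [ext_iff_mulVec]
  intro v
  rw [← mulVec_mulVec, zero_mulVec]
  set w := (1 - Q) *ᵥ v
  have hQw : Q *ᵥ w = 0 := by rw [mulVec_mulVec, mul_sub, mul_one, hQ.eq, sub_self, zero_mulVec]
  have hw := (le_iff.mp hAQ).dotProduct_mulVec_nonneg w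
  rw [sub_mulVec, smul_mulVec, hQw, smul_zero, zero_sub, dotProduct_neg, neg_nonneg] at hw
  exact (hA.posSemidef.dotProduct_mulVec_zero_iff w).mp
    (le_antisymm hw (hA.posSemidef.dotProduct_mulVec_nonneg w))

section TwoByTwo

variable {𝕜 : Type*} [RCLike 𝕜]

lemma Matrix.IsHermitian.eq_zero_of_trace_eq_zero_of_det_eq_zero {B : Matrix (Fin 2) (Fin 2) 𝕜}
    (hB : B.IsHermitian) (htr : B.trace = 0) (hdet : B.det = 0) : B = 0 := by
  rw [← hB.eigenvalues_eq_zero_iff]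
  rw [hB.trace_eq_sum_eigenvalues, Fin.sum_univ_two] at htr
  rw [hB.det_eq_prod_eigenvalues, Fin.prod_univ_two] at hdet
  have hsum : hB.eigenvalues 0 + hB.eigenvalues 1 = 0 := by exact_mod_cast htr
  have hprod : hB.eigenvalues 0 * hB.eigenvalues 1 = 0 := by exact_mod_cast hdet
  ext i
  fin_cases i <;> simp <;> nlinarith

lemma det_eq_zero_of_isIdempotentElem_of_ne_one {K n : Type*} [Field K] [Fintype n] [DecidableEq n]
    {Q : Matrix n n K} (hQ : IsIdempotentElem Q) (hQ1 : Q ≠ 1) : Q.det = 0 := by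
  by_contra hdet
  exact hQ1 ((IsIdempotentElem.iff_eq_one_of_isUnit ((isUnit_iff_isUnit_det Q).mpr
    (isUnit_iff_ne_zero.mpr hdet))).mp hQ)

lemma eq_trace_smul_of_mul_one_sub_eq_zero {Q R : Matrix (Fin 2) (Fin 2) 𝕜}
    (hQ : Q.IsHermitian) (hQQ : IsIdempotentElem Q) (hQtr : Q.trace = 1) (hR : R.IsHermitian)
    (hRQ : R * (1 - Q) = 0) : R = R.trace • Q := by
  set B := R - R.trace • Q with hB
  have hBQ : B = B * Q := by
    have hQ1Q : Q * (1 - Q) = 0 := by rw [mul_sub, mul_one, hQQ.eq, sub_self]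
    have hB1Q : B * (1 - Q) = 0 := by
      rw [hB, sub_mul, hRQ, smul_mul_assoc, hQ1Q, smul_zero, sub_zero]
    rwa [mul_sub, mul_one, sub_eq_zero] at hB1Q
  have hQdet : Q.det = 0 := det_eq_zero_of_isIdempotentElem_of_ne_one hQQ fun h => by
    simp [h] at hQtr
  have htrR : IsSelfAdjoint R.trace := by
    rw [IsSelfAdjoint, ← trace_conjTranspose, hR.eq]
  refine sub_eq_zero.mp (Matrix.IsHermitian.eq_zero_of_trace_eq_zero_of_det_eq_zero
    (hR.sub (htrR.smul hQ)) ?_ ?_)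
  · rw [trace_sub, trace_smul, hQtr, smul_eq_mul, mul_one, sub_self]
  · rw [← hB, hBQ, det_mul, hQdet, mul_zero]

lemma posDef_add_of_ne {P₁ P₂ : Matrix (Fin 2) (Fin 2) 𝕜} (h₁ : P₁.PosSemidef)
    (h₂ : P₂.PosSemidef) (htr : P₁.trace = P₂.trace) (hne : P₁ ≠ P₂) : (P₁ + P₂).PosDef := by
  refine (h₁.add h₂).posDef_iff_det_ne_zero.mpr fun hdet => hne ?_
  obtain ⟨x, hx, hσx⟩ := exists_mulVec_eq_zero_iff.mpr hdet
  have hq : star x ⬝ᵥ P₁ *ᵥ x + star x ⬝ᵥ P₂ *ᵥ x = 0 := by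
    rw [← dotProduct_add, ← add_mulVec, hσx, dotProduct_zero]
  obtain ⟨hq₁, hq₂⟩ := (add_eq_zero_iff_of_nonneg (h₁.dotProduct_mulVec_nonneg x)
    (h₂.dotProduct_mulVec_nonneg x)).mp hq
  have hdiff : (P₁ - P₂) *ᵥ x = 0 := by
    rw [sub_mulVec, (h₁.dotProduct_mulVec_zero_iff x).mp hq₁,
      (h₂.dotProduct_mulVec_zero_iff x).mp hq₂, sub_self]
  refine sub_eq_zero.mp ((h₁.isHermitian.sub h₂.isHermitian).eq_zero_of_trace_eq_zero_of_det_eq_zero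
    ?_ (exists_mulVec_eq_zero_iff.mp ⟨x, hx, hdiff⟩))
  rw [trace_sub, htr, sub_self]

end TwoByTwo

theorem qubit_channel_contracts_of_two_pure_to_pure
    (E : Matrix (Fin 2) (Fin 2) ℂ →ₗ[ℂ] Matrix (Fin 2) (Fin 2) ℂ) (hE : IsCPTP E)
    (P₁ P₂ Q : Matrix (Fin 2) (Fin 2) ℂ)
    (hP₁ : IsPureState P₁) (hP₂ : IsPureState P₂) (hQ : IsPureState Q)
    (hne : P₁ ≠ P₂) (h1 : E P₁ = Q) (h2 : E P₂ = Q) :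
    ∀ ρ : Matrix (Fin 2) (Fin 2) ℂ, ρ.PosSemidef → ρ.trace = 1 → E ρ = Q := by
  intro ρ hρ hρtr
  obtain ⟨hChoi, hTP⟩ := hE
  obtain ⟨hQpsd, hQtr, hQQ⟩ := hQ
  have hσ : (P₁ + P₂).PosDef := posDef_add_of_ne hP₁.1 hP₂.1 (hP₁.2.1.trans hP₂.2.1.symm) hne
  obtain ⟨c, hc⟩ := exists_le_smul_of_isStrictlyPositive hρ.isHermitian hσ.isStrictlyPositive
  have hEρ : E ρ ≤ (2 * c) • Q :=
    calc E ρ ≤ E (c • (P₁ + P₂)) := monotone_of_posSemidef_choiMatrix hChoi hc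
      _ = (2 * c) • Q := by rw [LinearMap.map_smul_of_tower, map_add, h1, h2, ← two_smul ℝ Q,
          smul_smul, mul_comm]
  have hEρpsd : (E ρ).PosSemidef := posSemidef_map_of_posSemidef_choiMatrix hChoi hρ
  have hEρQ := eq_trace_smul_of_mul_one_sub_eq_zero hQpsd.isHermitian hQQ hQtr hEρpsd.isHermitian
    (mul_one_sub_eq_zero_of_le_smul hQQ hEρpsd.nonneg hEρ)
  rwa [hTP, hρtr, one_smul] at hEρQ
end

section
/- Let E be a qubit quantum channel and ρ a full-rank (positive definite) 2×2 density matrix. If E(ρ) is a pure state |ψ⟩⟨ψ|, then E(σ) = |ψ⟩⟨ψ| for every density matrix σ. -/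
/-!
A full-rank state dominates every state up to a scalar: `σ ≤ c • ρ`. Channels are positive, hence
monotone, so `E σ ≤ c • E ρ = c • Q`. A positive operator dominated by a multiple of a projection
is supported on its range, so `E σ = Q * E σ * Q`, which for the rank-one projection `Q` is a
multiple of `Q`; comparing traces, the multiple is `1`.
-/

open scoped ComplexOrder

open Matrix
open scoped MatrixOrder

namespace Matrix

section Positivity

variable {n 𝕜 : Type*} [Fintype n] [DecidableEq n] [RCLike 𝕜]

/-- If the Choi matrix is `Wᴴ * W`, the Kraus operators are `K m i p = conj (W m (p, i))`. -/
theorem exists_kraus_of_posSemidef_choi {E : Matrix n n 𝕜 →ₗ[𝕜] Matrix n n 𝕜}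
    (hE : (of fun p q : n × n => E (single p.1 q.1 1) p.2 q.2).PosSemidef) :
    ∃ K : n × n → Matrix n n 𝕜, ∀ A, E A = ∑ m, K m * A * (K m)ᴴ := by
  obtain ⟨W, hW⟩ := CStarAlgebra.nonneg_iff_eq_star_mul_self.mp hE.nonneg
  have hC (p q i j : n) : E (single p q 1) i j = ∑ m, star (W m (p, i)) * W m (q, j) := by
    simpa [mul_apply] using congrFun (congrFun hW (p, i)) (q, j)
  refine ⟨fun m => of fun i p => star (W m (p, i)), fun A => ?_⟩
  have hEA : E A = ∑ p, ∑ q, A p q • E (single p q 1) := by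
    conv_lhs => rw [matrix_eq_sum_single A]
    simp [← map_smul]
  ext i j
  simp only [hEA, sum_apply, smul_apply, hC, mul_apply, of_apply, conjTranspose_apply, star_star,
    smul_eq_mul, Finset.mul_sum, Finset.sum_mul]
  rw [Finset.sum_comm]
  conv_rhs => rw [Finset.sum_comm]; enter [2, q]; rw [Finset.sum_comm]
  exact Finset.sum_congr rfl fun _ _ => Finset.sum_congr rfl fun _ _ =>
    Finset.sum_congr rfl fun _ _ => by ring

theorem monotone_of_posSemidef_choi {E : Matrix n n 𝕜 →ₗ[𝕜] Matrix n n 𝕜}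
    (hE : (of fun p q : n × n => E (single p.1 q.1 1) p.2 q.2).PosSemidef) : Monotone E := by
  intro A B hAB
  obtain ⟨K, hK⟩ := exists_kraus_of_posSemidef_choi hE
  rw [le_iff, ← map_sub, hK]
  exact posSemidef_sum _ fun m _ => (le_iff.mp hAB).mul_mul_conjTranspose_same (K m)

theorem PosDef.exists_le_smul {A B : Matrix n n 𝕜} (hA : A.PosDef) (hB : B.IsHermitian) :
    ∃ c : ℝ, B ≤ c • A := by
  cases isEmpty_or_nonempty n
  · exact ⟨0, (Subsingleton.elim B _).le⟩
  obtain ⟨ε, hε, hεA⟩ := (CFC.exists_pos_algebraMap_le_iff hA.isHermitian.isSelfAdjoint).mpr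
    fun x hx => hA.isStrictlyPositive.spectrum_pos hx
  obtain ⟨r, hr⟩ := (Set.finite_range hB.eigenvalues).bddAbove
  have hBr : B ≤ algebraMap ℝ _ (max r 0) :=
    le_algebraMap_of_spectrum_le (fun x hx => le_max_of_le_left
      (hr (hB.spectrum_real_eq_range_eigenvalues ▸ hx))) hB.isSelfAdjoint
  refine ⟨max r 0 / ε, hBr.trans ?_⟩
  calc algebraMap ℝ _ (max r 0) = (max r 0 / ε) • algebraMap ℝ (Matrix n n 𝕜) ε := by
        rw [Algebra.smul_def, ← map_mul, div_mul_cancel₀ _ hε.ne']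
    _ ≤ (max r 0 / ε) • A := smul_le_smul_of_nonneg_left hεA (by positivity)

/-- Compressing by `P = 1 - Q` kills `c • Q`, so `Pᴴ A P = 0`, which for `A = Bᴴ B` forces
`B P = 0`. -/
theorem mul_mul_eq_self_of_le_smul {A Q : Matrix n n 𝕜} (hA : 0 ≤ A)
    (hQ : IsStarProjection Q) {c : ℝ} (h : A ≤ c • Q) : Q * A * Q = A := by
  set P := 1 - Q with hPdef
  have hPs : star P = P := hQ.one_sub.isSelfAdjoint.star_eq
  have hPAP : P * A * P = 0 := by
    have hPQ : P * Q = 0 := by rw [hPdef, sub_mul, one_mul, hQ.isIdempotentElem.eq, sub_self]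
    refine le_antisymm ?_ (by simpa only [hPs] using star_left_conjugate_nonneg hA P)
    calc P * A * P ≤ P * (c • Q) * P := by
          simpa only [hPs] using star_left_conjugate_le_conjugate h P
      _ = 0 := by rw [mul_smul_comm, hPQ, smul_zero, zero_mul]
  obtain ⟨B, rfl⟩ := CStarAlgebra.nonneg_iff_eq_star_mul_self.mp hA
  have hBQ : B * Q = B := by
    have hBP : B * P = 0 := by
      rw [← conjTranspose_mul_self_eq_zero, conjTranspose_mul, ← star_eq_conjTranspose,
        ← star_eq_conjTranspose, hPs, ← hPAP]
      noncomm_ring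
    rwa [hPdef, mul_sub, mul_one, sub_eq_zero, eq_comm] at hBP
  have hAQ : star B * B * Q = star B * B := by rw [mul_assoc, hBQ]
  have hQA : Q * (star B * B) = star B * B := by
    simpa [hQ.isSelfAdjoint.star_eq, mul_assoc] using congrArg star hAQ
  rw [hQA, hAQ]

end Positivity

section FinTwo

variable {R : Type*} [CommRing R]

theorem det_eq_zero_of_isIdempotentElem_of_trace_eq_one {Q : Matrix (Fin 2) (Fin 2) R}
    (hQ : IsIdempotentElem Q) (htr : Q.trace = 1) : Q.det = 0 := by
  have h00 := congrFun (congrFun hQ.eq 0) 0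
  simp only [mul_apply, Fin.sum_univ_two] at h00
  rw [trace_fin_two] at htr
  rw [det_fin_two]
  linear_combination Q 0 0 * htr - h00

theorem mul_mul_eq_trace_mul_smul_of_det_eq_zero {Q : Matrix (Fin 2) (Fin 2) R}
    (hQ : Q.det = 0) (A : Matrix (Fin 2) (Fin 2) R) : Q * A * Q = (A * Q).trace • Q := by
  rw [det_fin_two] at hQ
  ext i j
  fin_cases i <;> fin_cases j <;> simp [mul_apply, Fin.sum_univ_two, trace_fin_two] <;> grind

theorem eq_trace_smul_of_mul_mul_eq {Q A : Matrix (Fin 2) (Fin 2) R}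
    (hQ : IsIdempotentElem Q) (htr : Q.trace = 1) (h : Q * A * Q = A) : A = A.trace • Q := by
  have hdet := det_eq_zero_of_isIdempotentElem_of_trace_eq_one hQ htr
  have hA : A = (A * Q).trace • Q := h.symm.trans (mul_mul_eq_trace_mul_smul_of_det_eq_zero hdet A)
  have hAQ : (A * Q).trace = A.trace := by simpa [htr] using (congrArg trace hA).symm
  rwa [hAQ] at hA

end FinTwo

end Matrix

theorem qubit_channel_contracts_of_full_rank_to_pure_general
    (E : Matrix (Fin 2) (Fin 2) ℂ →ₗ[ℂ] Matrix (Fin 2) (Fin 2) ℂ) (hE : IsCPTP E)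
    (ρ : Matrix (Fin 2) (Fin 2) ℂ) (hρ : ρ.PosDef)
    (Q : Matrix (Fin 2) (Fin 2) ℂ) (hQ : IsPureState Q) (hρQ : E ρ = Q) :
    ∀ σ : Matrix (Fin 2) (Fin 2) ℂ, σ.PosSemidef → σ.trace = 1 → E σ = Q := by
  intro σ hσ hσ1
  obtain ⟨hQpsd, hQtr, hQQ⟩ := hQ
  have hmono := monotone_of_posSemidef_choi hE.1
  obtain ⟨c, hσρ⟩ := hρ.exists_le_smul hσ.isHermitian
  have hEσ : E σ ≤ c • Q := by simpa [hρQ] using hmono hσρ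
  have hEσ_nonneg : 0 ≤ E σ := by simpa using hmono hσ.nonneg
  have hsupp : Q * E σ * Q = E σ :=
    mul_mul_eq_self_of_le_smul hEσ_nonneg ⟨hQQ, hQpsd.isHermitian⟩ hEσ
  simpa [hE.2 σ, hσ1] using eq_trace_smul_of_mul_mul_eq hQQ hQtr hsupp

theorem qubit_channel_contracts_of_full_rank_to_pure
    (E : Matrix (Fin 2) (Fin 2) ℂ →ₗ[ℂ] Matrix (Fin 2) (Fin 2) ℂ) (hE : IsCPTP E)
    (ρ : Matrix (Fin 2) (Fin 2) ℂ) (hρ : ρ.PosDef) (hρ1 : ρ.trace = 1)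
    (Q : Matrix (Fin 2) (Fin 2) ℂ) (hQ : IsPureState Q) (hρQ : E ρ = Q) :
    ∀ σ : Matrix (Fin 2) (Fin 2) ℂ, σ.PosSemidef → σ.trace = 1 → E σ = Q :=
  qubit_channel_contracts_of_full_rank_to_pure_general E hE ρ hρ Q hQ hρQ
end

section
/- For any quantum channel E on d×d matrices, the operator norm of its superoperator (matrix) representation Φ_E, acting on the vectorized d²-dimensional space with Euclidean norm, satisfies ‖Φ_E‖_∞ ≤ √d. -/
open scoped ComplexOrder

/-- The superoperator (matrix) representation of a map on matrices, acting on the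
row-wise vectorization: `Φ_E (i,j),(k,l) = E(|k⟩⟨l|) i j`. -/
def superop {d : ℕ} (E : Matrix (Fin d) (Fin d) ℂ →ₗ[ℂ] Matrix (Fin d) (Fin d) ℂ) :
    Matrix (Fin d × Fin d) (Fin d × Fin d) ℂ :=
  Matrix.of fun p q : Fin d × Fin d => E (Matrix.single q.1 q.2 1) p.1 p.2

/-! By Choi's theorem a completely positive `E` has a Kraus form `E X = ∑ₛ Kₛ X Kₛᴴ`, and trace
preservation gives `∑ₛ Kₛᴴ Kₛ = 1`. Thus `E X` is the product of the block row `[K₁ ⋯ Kᵣ]`,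
whose squared Frobenius norm is `tr ∑ₛ Kₛᴴ Kₛ = d`, with the block column `[X K₁ᴴ; ⋯; X Kᵣᴴ]`,
whose squared Frobenius norm is `tr (Xᴴ X ∑ₛ Kₛᴴ Kₛ) = ‖X‖²`. Submultiplicativity of the
Frobenius norm gives `‖E X‖ ≤ √d ‖X‖`, and the Frobenius norm of a matrix is the Euclidean norm
of its vectorization. -/

open Matrix

namespace Matrix

variable {α : Type*} {l m n τ : Type*}

def blockRow (B : τ → Matrix m n α) : Matrix m (τ × n) α := of fun i p => B p.1 i p.2

def blockCol (B : τ → Matrix m n α) : Matrix (τ × m) n α := of fun p j => B p.1 p.2 j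

theorem blockRow_mul_blockCol [Fintype m] [Fintype τ] [NonUnitalNonAssocSemiring α]
    (A : τ → Matrix l m α) (B : τ → Matrix m n α) :
    blockRow A * blockCol B = ∑ t, A t * B t := by
  ext i j
  simp only [blockRow, blockCol, mul_apply, sum_apply, Fintype.sum_prod_type, of_apply]

theorem sum_mul_eq_one_of_trace_sum_mul_mul [CommSemiring α] [Fintype n] [DecidableEq n]
    [Fintype τ] {A B : τ → Matrix n n α} (h : ∀ X, trace (∑ t, A t * X * B t) = trace X) :
    ∑ t, B t * A t = 1 := by
  rw [ext_iff_trace_mul_left]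
  intro X
  rw [Matrix.mul_one, ← h X, Matrix.mul_sum, trace_sum, trace_sum]
  refine Finset.sum_congr rfl fun t _ => ?_
  rw [trace_mul_comm, Matrix.mul_assoc, trace_mul_comm]

section Frobenius

open scoped Matrix.Norms.Frobenius

variable [Fintype m] [Fintype n] [Fintype τ]

section SeminormedAddCommGroup

variable [SeminormedAddCommGroup α]

lemma frobenius_norm_sq (A : Matrix m n α) : ‖A‖ ^ 2 = ∑ i, ∑ j, ‖A i j‖ ^ 2 := by
  rw [frobenius_norm_def, ← Real.rpow_natCast, ← Real.rpow_mul (by positivity)]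
  norm_num

lemma frobenius_norm_eq_norm_toLp_vec (A : Matrix m n α) : ‖A‖ = ‖WithLp.toLp 2 (vec A)‖ := by
  rw [← sq_eq_sq₀ (norm_nonneg _) (norm_nonneg _), frobenius_norm_sq, PiLp.norm_sq_eq_of_L2,
    Fintype.sum_prod_type, Finset.sum_comm]
  rfl

lemma frobenius_norm_sq_blockRow (B : τ → Matrix m n α) :
    ‖blockRow B‖ ^ 2 = ∑ t, ‖B t‖ ^ 2 := by
  simp only [frobenius_norm_sq, blockRow, Fintype.sum_prod_type, of_apply]
  exact Finset.sum_comm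

lemma frobenius_norm_sq_blockCol (B : τ → Matrix m n α) :
    ‖blockCol B‖ ^ 2 = ∑ t, ‖B t‖ ^ 2 := by
  simp only [frobenius_norm_sq, blockCol, Fintype.sum_prod_type, of_apply]

end SeminormedAddCommGroup

variable {𝕜 : Type*} [RCLike 𝕜]

lemma ofReal_frobenius_norm_sq (A : Matrix m n 𝕜) : ((‖A‖ ^ 2 : ℝ) : 𝕜) = trace (Aᴴ * A) := by
  rw [frobenius_norm_sq, trace, Finset.sum_comm]
  push_cast
  refine Finset.sum_congr rfl fun j _ => Finset.sum_congr rfl fun i _ => ?_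
  simp [RCLike.conj_mul]

theorem frobenius_norm_sum_mul_mul_conjTranspose_le [DecidableEq n] (K : τ → Matrix n n 𝕜)
    (hK : ∑ t, (K t)ᴴ * K t = 1) (X : Matrix n n 𝕜) :
    ‖∑ t, K t * X * (K t)ᴴ‖ ≤ √(Fintype.card n) * ‖X‖ := by
  have hrow : ‖blockRow K‖ = √(Fintype.card n) := by
    rw [← Real.sqrt_sq (norm_nonneg _), frobenius_norm_sq_blockRow]
    congr 1
    apply RCLike.ofReal_injective (K := 𝕜)
    simp [ofReal_frobenius_norm_sq, ← trace_sum, hK]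
  have hcol : ‖blockCol fun t => X * (K t)ᴴ‖ = ‖X‖ := by
    rw [← sq_eq_sq₀ (norm_nonneg _) (norm_nonneg _), frobenius_norm_sq_blockCol]
    apply RCLike.ofReal_injective (K := 𝕜)
    simp only [RCLike.ofReal_sum, ofReal_frobenius_norm_sq]
    calc ∑ t, trace ((X * (K t)ᴴ)ᴴ * (X * (K t)ᴴ))
        _ = ∑ t, trace (Xᴴ * X * ((K t)ᴴ * K t)) := Finset.sum_congr rfl fun t _ => by
            rw [conjTranspose_mul, conjTranspose_conjTranspose, Matrix.mul_assoc, trace_mul_comm]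
            simp only [Matrix.mul_assoc]
        _ = trace (Xᴴ * X) := by rw [← trace_sum, ← Matrix.mul_sum, hK, Matrix.mul_one]
  simp only [Matrix.mul_assoc, ← blockRow_mul_blockCol]
  exact (frobenius_norm_mul _ _).trans_eq (by rw [hrow, hcol])

end Frobenius

end Matrix

namespace LinearMap

variable {𝕜 : Type*} [RCLike 𝕜] {n : Type*} [Fintype n] [DecidableEq n]

def choi (E : Matrix n n 𝕜 →ₗ[𝕜] Matrix n n 𝕜) : Matrix (n × n) (n × n) 𝕜 :=
  of fun p q => E (Matrix.single p.1 q.1 1) p.2 q.2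

lemma apply_eq_sum_choi (E : Matrix n n 𝕜 →ₗ[𝕜] Matrix n n 𝕜) (X : Matrix n n 𝕜) (i j : n) :
    E X i j = ∑ k, ∑ l, X k l * choi E (k, i) (l, j) := by
  have hsingle (k l : n) : Matrix.single k l (X k l) = X k l • Matrix.single k l (1 : 𝕜) := by
    rw [smul_single, smul_eq_mul, mul_one]
  conv_lhs => rw [matrix_eq_sum_single X]
  simp only [hsingle, map_sum, map_smul, Matrix.sum_apply, Matrix.smul_apply, smul_eq_mul, choi,
    of_apply]

theorem exists_kraus_of_posSemidef_choi {E : Matrix n n 𝕜 →ₗ[𝕜] Matrix n n 𝕜}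
    (hE : (choi E).PosSemidef) :
    ∃ (r : ℕ) (K : Fin r → Matrix n n 𝕜), ∀ X, E X = ∑ s, K s * X * (K s)ᴴ := by
  obtain ⟨r, v, hv⟩ := posSemidef_iff_eq_sum_vecMulVec.mp hE
  refine ⟨r, fun s => of fun i k => v s (k, i), fun X => ?_⟩
  ext i j
  simp only [apply_eq_sum_choi E X, hv, Matrix.sum_apply, vecMulVec_apply, Matrix.mul_apply,
    of_apply, conjTranspose_apply, Pi.star_apply, Finset.mul_sum, Finset.sum_mul]
  calc _ = ∑ k, ∑ s, ∑ l, X k l * (v s (k, i) * star (v s (l, j))) :=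
        Finset.sum_congr rfl fun k _ => Finset.sum_comm
    _ = ∑ s, ∑ k, ∑ l, X k l * (v s (k, i) * star (v s (l, j))) := Finset.sum_comm
    _ = _ := Finset.sum_congr rfl fun s _ => by
        rw [Finset.sum_comm]
        exact Finset.sum_congr rfl fun l _ => Finset.sum_congr rfl fun k _ => by ring

end LinearMap

section Superop

open scoped Matrix.Norms.Frobenius

variable {d : ℕ} (E : Matrix (Fin d) (Fin d) ℂ →ₗ[ℂ] Matrix (Fin d) (Fin d) ℂ)

-- Mathlib's `vec` stacks columns, so `vec ρᵀ` is the row-wise vectorization `|ρ⟩⟩`.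
theorem superop_mulVec_vec_transpose (ρ : Matrix (Fin d) (Fin d) ℂ) :
    superop E *ᵥ vec ρᵀ = vec (E ρ)ᵀ := by
  ext ⟨i, j⟩
  change _ = E ρ i j
  rw [E.apply_eq_sum_choi]
  simp only [mulVec, dotProduct, superop, Fintype.sum_prod_type, of_apply, vec, transpose_apply,
    LinearMap.choi]
  exact Finset.sum_congr rfl fun k _ => Finset.sum_congr rfl fun l _ => mul_comm _ _

theorem superop_opNorm_le {c : ℝ} (hc : 0 ≤ c) (h : ∀ ρ, ‖E ρ‖ ≤ c * ‖ρ‖) :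
    ‖toEuclideanCLM (𝕜 := ℂ) (superop E)‖ ≤ c := by
  refine ContinuousLinearMap.opNorm_le_bound _ hc fun v => ?_
  obtain ⟨ρ, rfl⟩ : ∃ ρ : Matrix (Fin d) (Fin d) ℂ, WithLp.toLp 2 (vec ρᵀ) = v :=
    ⟨of (Function.curry v.ofLp), rfl⟩
  rw [toEuclideanCLM_toLp, superop_mulVec_vec_transpose, ← frobenius_norm_eq_norm_toLp_vec,
    ← frobenius_norm_eq_norm_toLp_vec, frobenius_norm_transpose, frobenius_norm_transpose]
  exact h ρ

end Superop

theorem superop_opNorm_le_sqrt_dim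
    (d : ℕ) (E : Matrix (Fin d) (Fin d) ℂ →ₗ[ℂ] Matrix (Fin d) (Fin d) ℂ)
    (hE : IsCPTP E) :
    ‖Matrix.toEuclideanCLM (𝕜 := ℂ) (superop E)‖ ≤ Real.sqrt d := by
  obtain ⟨r, K, hEK⟩ := E.exists_kraus_of_posSemidef_choi hE.1
  have hK : ∑ s, (K s)ᴴ * K s = 1 :=
    sum_mul_eq_one_of_trace_sum_mul_mul fun X => by rw [← hEK, hE.2]
  refine superop_opNorm_le E (Real.sqrt_nonneg _) fun ρ => ?_
  simpa [hEK] using frobenius_norm_sum_mul_mul_conjTranspose_le K hK ρ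
end

section
/- Let |Ω⟩ = Σ_{i=0}^{1} Σ_{j=0}^{N−1} f_{ij} |a_i⟩|b_j⟩ be a normalized pure state on ℂ² ⊗ ℂ^N written in product orthonormal bases. Then 2·√(Σ_{j<k} |f_{0j} f_{1k} − f_{1j} f_{0k}|²) = 2·√(λ(1−λ)), where λ is an eigenvalue of the reduced state Tr₂(|Ω⟩⟨Ω|) on ℂ². -/
/-!
The reduced state is `ρ = A Aᴴ` with `A = (f i j)`. It has trace `1`, and by the `2 × 2` case of
Cauchy–Binet its determinant is `∑_{j<k} |f 0 j f 1 k - f 1 j f 0 k|²`. An eigenvalue `λ` is a root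
of the characteristic polynomial `λ² - (tr ρ) λ + det ρ`, so `λ (1 - λ) = det ρ`.
-/

open Finset Matrix

theorem Finset.sum_sum_eq_sum_diag_add_sum_Ioi {ι M : Type*} [Fintype ι] [LinearOrder ι]
    [LocallyFiniteOrderTop ι] [LocallyFiniteOrderBot ι] [AddCommMonoid M] (g : ι → ι → M) :
    ∑ j, ∑ k, g j k = ∑ j, g j j + ∑ j, ∑ k ∈ Ioi j, (g j k + g k j) := by
  have hrow : ∀ j, ∑ k, g j k = g j j + ∑ k ∈ Ioi j, g j k + ∑ k ∈ Iio j, g j k := fun j => by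
    rw [← sum_filter_add_sum_filter_not univ (j ≤ ·), filter_le_eq_Ici, Ici_eq_cons_Ioi, sum_cons]
    simp [filter_gt_eq_Iio]
  have hswap : ∑ j, ∑ k ∈ Iio j, g j k = ∑ k, ∑ j ∈ Ioi k, g j k :=
    sum_comm' (by simp)
  simp only [hrow, sum_add_distrib, hswap]
  abel

theorem Matrix.det_mul_conjTranspose_fin_two {R ι : Type*} [CommRing R] [StarRing R]
    [Fintype ι] [LinearOrder ι] [LocallyFiniteOrderTop ι] [LocallyFiniteOrderBot ι]
    (A : Matrix (Fin 2) ι R) :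
    (A * Aᴴ).det = ∑ j, ∑ k ∈ Ioi j,
      (A 0 j * A 1 k - A 1 j * A 0 k) * star (A 0 j * A 1 k - A 1 j * A 0 k) := by
  set g : ι → ι → R := fun j k =>
    A 0 j * star (A 0 j) * (A 1 k * star (A 1 k)) - A 0 j * star (A 1 j) * (A 1 k * star (A 0 k))
  have hdet : (A * Aᴴ).det = ∑ j, ∑ k, g j k := by
    simp only [det_fin_two, mul_apply, conjTranspose_apply, sum_mul_sum, ← sum_sub_distrib, g]
  have hdiag : ∀ j, g j j = 0 := fun j => by simp only [g]; ring
  have hpair : ∀ j k, g j k + g k j =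
      (A 0 j * A 1 k - A 1 j * A 0 k) * star (A 0 j * A 1 k - A 1 j * A 0 k) := fun j k => by
    simp only [g, star_sub, star_mul]; ring
  simp only [hdet, sum_sum_eq_sum_diag_add_sum_Ioi, hdiag, hpair, sum_const_zero, zero_add]

theorem Matrix.trace_mul_conjTranspose {R m n : Type*} [CommRing R] [StarRing R] [Fintype m]
    [Fintype n] (A : Matrix m n R) : (A * Aᴴ).trace = ∑ i, ∑ j, A i j * star (A i j) := by
  simp [trace, mul_apply]

theorem Matrix.sq_sub_trace_mul_add_det_eq_zero_of_hasEigenvalue {R : Type*} [CommRing R]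
    [IsDomain R] {M : Matrix (Fin 2) (Fin 2) R} {μ : R} (h : Module.End.HasEigenvalue M.toLin' μ) :
    μ ^ 2 - M.trace * μ + M.det = 0 := by
  rw [Module.End.hasEigenvalue_iff_isRoot_charpoly, charpoly_toLin', charpoly_fin_two] at h
  simpa using h

theorem concurrence_eq_sqrt_eigenvalue_product
    (N : ℕ) (f : Fin 2 → Fin N → ℂ)
    (hnorm : ∑ i, ∑ j, ‖f i j‖ ^ 2 = 1)
    (lam : ℝ)
    (hlam : Module.End.HasEigenvalue
      (Matrix.toLin' (Matrix.of fun i k : Fin 2 =>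
        ∑ j, f i j * (starRingEnd ℂ) (f k j))) (lam : ℂ)) :
    2 * Real.sqrt (∑ j : Fin N, ∑ k ∈ Finset.Ioi j,
        ‖f 0 j * f 1 k - f 1 j * f 0 k‖ ^ 2)
      = 2 * Real.sqrt (lam * (1 - lam)) := by
  let A : Matrix (Fin 2) (Fin N) ℂ := Matrix.of f
  have hρ : (Matrix.of fun i k : Fin 2 => ∑ j, f i j * (starRingEnd ℂ) (f k j)) = A * Aᴴ := by
    ext i k
    simp [A, mul_apply]
  have htr : (A * Aᴴ).trace = 1 := by
    rw [trace_mul_conjTranspose]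
    simp only [A, of_apply, RCLike.star_def, Complex.mul_conj']
    exact_mod_cast hnorm
  have hdet : (A * Aᴴ).det = ((∑ j : Fin N, ∑ k ∈ Ioi j,
      ‖f 0 j * f 1 k - f 1 j * f 0 k‖ ^ 2 : ℝ) : ℂ) := by
    rw [det_mul_conjTranspose_fin_two]
    push_cast
    simp only [A, of_apply, RCLike.star_def, Complex.mul_conj']
  rw [hρ] at hlam
  have hchar := sq_sub_trace_mul_add_det_eq_zero_of_hasEigenvalue hlam
  rw [htr, hdet] at hchar
  have hconc : ∑ j : Fin N, ∑ k ∈ Ioi j, ‖f 0 j * f 1 k - f 1 j * f 0 k‖ ^ 2 = lam * (1 - lam) :=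
    Complex.ofReal_injective (by push_cast at hchar ⊢; linear_combination hchar)
  rw [hconc]
end
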